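/- Let n ≥ 1 and 1 ≤ k ≤ n. Let K be a compact convex subset of ℝⁿ that is contained in some k-dimensional affine subspace of ℝⁿ, and let e ∈ ℝⁿ be a unit vector. Then the lower Lebesgue integral over t ∈ ℝ of the (k−1)-dimensional Hausdorff measure of the slice K ∩ {x ∈ ℝⁿ : ⟪x, e⟫ = t} is at most the k-dimensional Hausdorff measure of K: ∫⁻_{t∈ℝ} μH[k−1]( K ∩ {x : ⟪x,e⟫ = t} ) dt ≤ μH[k](K). -/

import Mathlib

open MeasureTheory
open scoped InnerProductSpace ENNReal

open Filter EMetric Set in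
/-- Slicing estimate for an arbitrary set: the lower integral over `t ∈ ℝ` of the
`d`-dimensional Hausdorff measure of the slice of `s` by the hyperplane
`{x : ⟪x, e⟫ = t}` is at most the `(d+1)`-dimensional Hausdorff measure of `s`. -/
theorem slicing_aux (n : ℕ) (d : ℝ) (hd : 0 ≤ d) (s : Set (EuclideanSpace ℝ (Fin n)))
    (e : EuclideanSpace ℝ (Fin n)) (he : ‖e‖ = 1) :
    ∫⁻ t : ℝ, μH[d] (s ∩ {x : EuclideanSpace ℝ (Fin n) | ⟪x, e⟫_ℝ = t}) ≤ μH[d + 1] s := by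
  by_cases htop : μH[d + 1] s = ∞
  · rw [htop]; exact le_top
  refine ENNReal.le_of_forall_pos_le_add fun ε hε _ => ?_
  -- choose, for each `j`, a `(j+1)⁻¹`-cover of `s` whose Hausdorff sum is `< μH[d+1] s + ε`
  have hex : ∀ j : ℕ, ∃ C : ℕ → Set (EuclideanSpace ℝ (Fin n)), (s ⊆ ⋃ m, C m) ∧
      (∀ m, diam (C m) ≤ ((j : ℝ≥0∞) + 1)⁻¹) ∧
      (∑' m, ⨆ _ : (C m).Nonempty, diam (C m) ^ (d + 1)) < μH[d + 1] s + ε := by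
    intro j
    have h1 : (⨅ (C : ℕ → Set (EuclideanSpace ℝ (Fin n))) (_ : s ⊆ ⋃ m, C m)
        (_ : ∀ m, diam (C m) ≤ ((j : ℝ≥0∞) + 1)⁻¹),
        ∑' m, ⨆ _ : (C m).Nonempty, diam (C m) ^ (d + 1)) ≤ μH[d + 1] s := by
      rw [Measure.hausdorffMeasure_apply]
      exact le_iSup₂_of_le ((j : ℝ≥0∞) + 1)⁻¹ (ENNReal.inv_pos.2 (by simp)) le_rfl
    have h2 := h1.trans_lt (ENNReal.lt_add_right htop (ENNReal.coe_ne_zero.2 hε.ne'))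
    rw [iInf_lt_iff] at h2
    obtain ⟨C, h2⟩ := h2
    rw [iInf_lt_iff] at h2
    obtain ⟨hC1, h2⟩ := h2
    rw [iInf_lt_iff] at h2
    obtain ⟨hC2, h2⟩ := h2
    exact ⟨C, hC1, hC2, h2⟩
  choose C hcov hsmall hsum using hex
  have hDne : ∀ j m, diam (C j m) ≠ ∞ := by
    intro j m
    refine ((hsmall j m).trans_lt ?_).ne
    exact ENNReal.inv_lt_top.2 (by simp)
  have hbdd : ∀ j m, Bornology.IsBounded (C j m) :=
    fun j m => Metric.isBounded_iff_ediam_ne_top.2 (hDne j m)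
  set f : EuclideanSpace ℝ (Fin n) → ℝ := fun x => ⟪x, e⟫_ℝ with hf
  have hdist : ∀ j m, ∀ x ∈ C j m, ∀ y ∈ C j m, f x - f y ≤ Metric.diam (C j m) := by
    intro j m x hx y hy
    have h1 : f x - f y = ⟪x - y, e⟫_ℝ := by simp [hf, inner_sub_left]
    have h2 : ⟪x - y, e⟫_ℝ ≤ ‖x - y‖ * ‖e‖ := real_inner_le_norm _ _
    rw [he, mul_one] at h2
    rw [h1]
    refine h2.trans ?_
    rw [← dist_eq_norm]
    exact Metric.dist_le_diam_of_mem (hbdd j m) hx hy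
  set A : ℕ → ℕ → Set ℝ := fun j m => Icc (sInf (f '' C j m)) (sSup (f '' C j m)) with hA
  have hmem : ∀ j m, ∀ x ∈ C j m, f x ∈ A j m := by
    intro j m x hx
    have hub : ∀ y ∈ f '' C j m, y ≤ f x + Metric.diam (C j m) := by
      rintro _ ⟨y, hy, rfl⟩
      have := hdist j m y hy x hx; linarith
    have hlb : ∀ y ∈ f '' C j m, f x - Metric.diam (C j m) ≤ y := by
      rintro _ ⟨y, hy, rfl⟩
      have := hdist j m x hx y hy; linarith
    exact ⟨csInf_le ⟨_, hlb⟩ (mem_image_of_mem f hx),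
      le_csSup ⟨_, hub⟩ (mem_image_of_mem f hx)⟩
  have hvol : ∀ j m, volume (A j m) ≤ diam (C j m) := by
    intro j m
    rw [hA]
    simp only [Real.volume_Icc]
    rcases (C j m).eq_empty_or_nonempty with hCe | ⟨x, hx⟩
    · simp [hCe, Real.sSup_empty, Real.sInf_empty]
    · have hne : (f '' C j m).Nonempty := ⟨f x, mem_image_of_mem f hx⟩
      have h1 : sSup (f '' C j m) - sInf (f '' C j m) ≤ Metric.diam (C j m) := by
        rw [sub_le_iff_le_add]
        refine csSup_le hne ?_
        rintro _ ⟨y, hy, rfl⟩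
        rw [add_comm, ← sub_le_iff_le_add]
        refine le_csInf hne ?_
        rintro _ ⟨z, hz, rfl⟩
        have := hdist j m y hy z hz; linarith
      calc ENNReal.ofReal (sSup (f '' C j m) - sInf (f '' C j m))
          ≤ ENNReal.ofReal (Metric.diam (C j m)) := ENNReal.ofReal_le_ofReal h1
        _ = diam (C j m) := by rw [Metric.diam]; exact ENNReal.ofReal_toReal (hDne j m)
  set g : ℕ → ℝ → ℝ≥0∞ := fun j t => ∑' m, (A j m).indicator (fun _ => diam (C j m) ^ d) t
    with hg
  have hgmeas : ∀ j, Measurable (g j) := fun j =>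
    Measurable.ennreal_tsum fun m => Measurable.indicator measurable_const measurableSet_Icc
  -- pointwise bound on the slices
  have hpt : ∀ t : ℝ, μH[d] (s ∩ {x : EuclideanSpace ℝ (Fin n) | ⟪x, e⟫_ℝ = t}) ≤ liminf (fun j => g j t) atTop := by
    intro t
    rw [Measure.hausdorffMeasure_apply]
    refine iSup₂_le fun R hR => ?_
    obtain ⟨J, hJ⟩ := ENNReal.exists_inv_nat_lt hR.ne'
    rw [liminf_eq_iSup_iInf_of_nat]
    refine le_iSup_of_le J (le_iInf₂ fun j hj => ?_)
    have hrR : ((j : ℝ≥0∞) + 1)⁻¹ ≤ R := by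
      refine le_trans ?_ hJ.le
      refine ENNReal.inv_le_inv.2 ?_
      exact le_trans (by exact_mod_cast hj : (J : ℝ≥0∞) ≤ (j : ℝ≥0∞)) le_self_add
    refine iInf_le_of_le (fun m => C j m ∩ {x : EuclideanSpace ℝ (Fin n) | ⟪x, e⟫_ℝ = t}) ?_
    refine iInf_le_of_le ?_ ?_
    · intro x hx
      obtain ⟨m, hm⟩ := mem_iUnion.1 (hcov j hx.1)
      exact mem_iUnion.2 ⟨m, hm, hx.2⟩
    refine iInf_le_of_le (fun m => (diam_mono inter_subset_left).trans ((hsmall j m).trans hrR)) ?_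
    refine ENNReal.tsum_le_tsum fun m => ?_
    refine iSup_le fun hne => ?_
    obtain ⟨x, hxC, hxH⟩ := hne
    have hxt : f x = t := hxH
    have ht : t ∈ A j m := hxt ▸ hmem j m x hxC
    rw [indicator_of_mem ht]
    exact ENNReal.rpow_le_rpow (diam_mono inter_subset_left) hd
  -- bound on the integrals of the majorants
  have hint : ∀ j, (∫⁻ t, g j t) ≤ μH[d + 1] s + ε := by
    intro j
    have h1 : (∫⁻ t, g j t) = ∑' m, diam (C j m) ^ d * volume (A j m) := by
      rw [hg]
      rw [lintegral_tsum fun m =>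
        (Measurable.indicator measurable_const measurableSet_Icc).aemeasurable]
      congr 1
      funext m
      rw [lintegral_indicator measurableSet_Icc _, setLIntegral_const]
    rw [h1]
    refine le_trans (ENNReal.tsum_le_tsum fun m => ?_) (hsum j).le
    rcases eq_or_ne (diam (C j m)) 0 with h0 | h0
    · have hv0 : volume (A j m) = 0 := le_antisymm (h0 ▸ hvol j m) zero_le
      simp [hv0]
    · have hne : (C j m).Nonempty := by
        rcases (C j m).eq_empty_or_nonempty with h | h
        · exact absurd (by rw [h]; exact Metric.ediam_empty) h0
        · exact h
      refine le_trans ?_ (le_iSup_of_le hne le_rfl)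
      calc diam (C j m) ^ d * volume (A j m) ≤ diam (C j m) ^ d * diam (C j m) :=
            mul_le_mul_right (hvol j m) _
        _ = diam (C j m) ^ (d + 1) := by
            rw [ENNReal.rpow_add _ _ h0 (hDne j m), ENNReal.rpow_one]
  calc ∫⁻ t : ℝ, μH[d] (s ∩ {x : EuclideanSpace ℝ (Fin n) | ⟪x, e⟫_ℝ = t})
      ≤ ∫⁻ t, liminf (fun j => g j t) atTop := lintegral_mono hpt
    _ ≤ liminf (fun j => ∫⁻ t, g j t) atTop := lintegral_liminf_le hgmeas
    _ ≤ μH[d + 1] s + ε := by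
        refine le_trans (liminf_le_liminf (Filter.Eventually.of_forall hint)) ?_
        simp [liminf_const]

/-- Slicing estimate for a `k`-cell: the lower integral over `t ∈ ℝ` of the
`(k-1)`-dimensional Hausdorff measure of the slice of `K` by the hyperplane
`{x : ⟪x, e⟫ = t}` is at most the `k`-dimensional Hausdorff measure of `K`. -/
theorem slicing_estimate (n k : ℕ) (hn : 1 ≤ n) (hk1 : 1 ≤ k) (hkn : k ≤ n)
    (K : Set (EuclideanSpace ℝ (Fin n))) (hKc : IsCompact K) (hKconv : Convex ℝ K)
    (P : AffineSubspace ℝ (EuclideanSpace ℝ (Fin n)))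
    (hdim : Module.finrank ℝ P.direction = k) (hKP : K ⊆ (P : Set (EuclideanSpace ℝ (Fin n))))
    (e : EuclideanSpace ℝ (Fin n)) (he : ‖e‖ = 1) :
    ∫⁻ t : ℝ, μH[(k : ℝ) - 1] (K ∩ {x : EuclideanSpace ℝ (Fin n) | ⟪x, e⟫_ℝ = t})
      ≤ μH[(k : ℝ)] K := by
  have hd : (0 : ℝ) ≤ (k : ℝ) - 1 := by
    have : (1 : ℝ) ≤ (k : ℝ) := by exact_mod_cast hk1
    linarith
  have h := slicing_aux n ((k : ℝ) - 1) hd K e he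
  have hk : (k : ℝ) - 1 + 1 = (k : ℝ) := by ring
  rwa [hk] at h
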